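/- Let 0 < x < π and 0 < δ ≤ π − x. Then there exists ξ in the image of the function y ↦ y·√(log(1 + 1/y)) on the interval [x, x + δ] such that −∫ₓ^{x+δ} I(x,y)·y·√(log(1 + 1/y)) dy = ξ·( ( S₂(δ) + S₂(2x + δ) − 2·S₂(x + δ) ) − ( S₂(0) + S₂(2x) − 2·S₂(x) ) ), where S₂(t) = ∑_{n=1}^{∞} sin(n t)/n². -/

import Mathlib

open Set

/-- The Clausen function of order 2, `S₂(t) = ∑_{n=1}^∞ sin(n t)/n²`. -/
noncomputable def clausenS2 (t : ℝ) : ℝ := ∑' n : ℕ, Real.sin ((n + 1) * t) / ((n : ℝ) + 1) ^ 2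

/-- The kernel `I(x,y) = log( sin((y−x)/2)·sin((x+y)/2) / sin(y/2)² )`. -/
noncomputable def Iker (x y : ℝ) : ℝ :=
  Real.log (Real.sin ((y - x) / 2) * Real.sin ((x + y) / 2) / Real.sin (y / 2) ^ 2)

/-!
With `C₁(t) = -log (2 sin (t/2))`, one has `-I(x,y) = C₁(y-x) + C₁(x+y) - 2 C₁(y)`, and `S₂` is a
primitive of `C₁` on `[0, 2π]`. For the latter, `S₂` is continuous and its partial sums have
derivatives `∑_{k ≤ n} cos(k t)/k`, which converge to `C₁` locally uniformly on `(0, 2π)`: the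
difference `C₁ - ∑_{k ≤ n} cos(k t)/k` has the Dirichlet kernel `-cos((n+½)t) / (2 sin(t/2))` as
derivative, so by integration by parts it varies by `O(1/n)` on compact subintervals, and its value
at `π` is `-log 2 + ∑_{k ≤ n} (-1)^(k-1)/k → 0`. Hence `∫ₓ^{x+δ} -I(x,y) dy` is the stated
combination of values of `S₂`. Since `I(x,·) < 0` on `(x, x+δ]`, the first mean value theorem for
integrals produces `ξ`.
-/

open Real MeasureTheory Filter Topology

/-- The paper's `C₁(t) = -log (2 sin (|t|/2))` for `|t| < 2π`, since `Real.log` ignores signs. -/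
noncomputable def clausenC1 (t : ℝ) : ℝ := -log (2 * sin (t / 2))

noncomputable def clausenS2Partial (n : ℕ) (t : ℝ) : ℝ :=
  ∑ k ∈ Finset.range n, sin ((k + 1) * t) / ((k : ℝ) + 1) ^ 2

noncomputable def clausenC1Partial (n : ℕ) (t : ℝ) : ℝ :=
  ∑ k ∈ Finset.range n, cos ((k + 1) * t) / ((k : ℝ) + 1)

lemma sin_half_pos {t : ℝ} (h0 : 0 < t) (h2π : t < 2 * π) : 0 < sin (t / 2) :=
  sin_pos_of_pos_of_lt_pi (by linarith) (by linarith)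

lemma intervalIntegrable_clausenC1 (a b : ℝ) : IntervalIntegrable clausenC1 volume a b := by
  have : AnalyticOnNhd ℝ (fun t : ℝ => 2 * sin (t / 2)) (uIcc a b) := fun _ _ =>
    analyticAt_const.mul (analyticAt_sin.comp analyticAt_id.div_const)
  exact this.meromorphicOn.intervalIntegrable_log.neg

lemma intervalIntegrable_clausenC1_comp_sub_right (c a b : ℝ) :
    IntervalIntegrable (fun y => clausenC1 (y - c)) volume a b := by
  simpa using (intervalIntegrable_clausenC1 (a - c) (b - c)).comp_sub_right c

lemma intervalIntegrable_clausenC1_comp_add_left (c a b : ℝ) :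
    IntervalIntegrable (fun y => clausenC1 (c + y)) volume a b := by
  simpa using (intervalIntegrable_clausenC1 (c + a) (c + b)).comp_add_left c

lemma norm_clausenS2_term_le (n : ℕ) (t : ℝ) :
    ‖sin ((n + 1) * t) / ((n : ℝ) + 1) ^ 2‖ ≤ 1 / ((n : ℝ) + 1) ^ 2 := by
  rw [norm_div, norm_pow, Real.norm_of_nonneg (by positivity : (0 : ℝ) ≤ n + 1)]
  gcongr
  exact abs_sin_le_one _

lemma summable_one_div_succ_sq : Summable fun n : ℕ => 1 / ((n : ℝ) + 1) ^ 2 := by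
  exact_mod_cast (summable_nat_add_iff 1).mpr (summable_one_div_nat_pow.mpr one_lt_two)

lemma continuous_clausenS2 : Continuous clausenS2 :=
  continuous_tsum (fun _ => by fun_prop) summable_one_div_succ_sq norm_clausenS2_term_le

lemma tendsto_clausenS2Partial (t : ℝ) :
    Tendsto (clausenS2Partial · t) atTop (𝓝 (clausenS2 t)) :=
  (Summable.of_norm_bounded summable_one_div_succ_sq
    (norm_clausenS2_term_le · t)).hasSum.tendsto_sum_nat

lemma hasDerivAt_clausenS2Partial (n : ℕ) (t : ℝ) :
    HasDerivAt (clausenS2Partial n) (clausenC1Partial n t) t := by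
  unfold clausenS2Partial clausenC1Partial
  refine HasDerivAt.fun_sum fun k _ => ?_
  have h := (((hasDerivAt_id t).const_mul ((k : ℝ) + 1)).sin).div_const (((k : ℝ) + 1) ^ 2)
  simp only [id, mul_one] at h
  exact h.congr_deriv (by field_simp)

lemma hasDerivAt_clausenC1Partial (n : ℕ) (t : ℝ) :
    HasDerivAt (clausenC1Partial n) (-∑ k ∈ Finset.range n, sin ((k + 1) * t)) t := by
  unfold clausenC1Partial
  rw [← Finset.sum_neg_distrib]
  refine HasDerivAt.fun_sum fun k _ => ?_
  have h := (((hasDerivAt_id t).const_mul ((k : ℝ) + 1)).cos).div_const ((k : ℝ) + 1)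
  simp only [id, mul_one] at h
  exact h.congr_deriv (by field_simp)

lemma two_mul_sin_half_mul_sum_sin (n : ℕ) (t : ℝ) :
    2 * sin (t / 2) * ∑ k ∈ Finset.range n, sin ((k + 1) * t) =
      cos (t / 2) - cos ((n + 1 / 2) * t) := by
  induction n with
  | zero => simp [div_eq_inv_mul]
  | succ n ih =>
    have hstep : 2 * sin (t / 2) * sin ((n + 1) * t) =
        cos ((n + 1 / 2) * t) - cos ((n + 1 + 1 / 2) * t) := by
      rw [mul_assoc, mul_comm (sin _), ← mul_assoc, two_mul_sin_mul_sin]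
      ring_nf
    rw [Finset.sum_range_succ, mul_add, ih, hstep]
    push_cast
    ring

lemma hasDerivAt_two_mul_sin_half (t : ℝ) :
    HasDerivAt (fun s => 2 * sin (s / 2)) (cos (t / 2)) t :=
  (((hasDerivAt_id t).div_const 2).sin.const_mul 2).congr_deriv (by simp; ring)

lemma hasDerivAt_clausenC1_sub_clausenC1Partial (n : ℕ) {t : ℝ} (h0 : 0 < t) (h2π : t < 2 * π) :
    HasDerivAt (fun s => clausenC1 s - clausenC1Partial n s)
      (-((2 * sin (t / 2))⁻¹ * cos ((n + 1 / 2) * t))) t := by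
  have hsin : sin (t / 2) ≠ 0 := (sin_half_pos h0 h2π).ne'
  refine (((hasDerivAt_two_mul_sin_half t).log (by positivity)).neg.sub
    (hasDerivAt_clausenC1Partial n t)).congr_deriv ?_
  field_simp
  linear_combination (norm := ring_nf) two_mul_sin_half_mul_sum_sin n t

/-- Integration by parts against `sin (ω s) / ω`. -/
lemma abs_integral_mul_cos_le {φ φ' : ℝ → ℝ} {a b M M' ω : ℝ} (hω : 0 < ω)
    (hφ : ∀ s ∈ uIcc a b, HasDerivAt φ (φ' s) s) (hφ' : IntervalIntegrable φ' volume a b)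
    (hM : ∀ s ∈ uIcc a b, |φ s| ≤ M) (hM' : ∀ s ∈ uIcc a b, |φ' s| ≤ M') :
    |∫ s in a..b, φ s * cos (ω * s)| ≤ (2 * M + M' * |b - a|) / ω := by
  set v : ℝ → ℝ := fun s => sin (ω * s) / ω
  have hv : ∀ s ∈ uIcc a b, HasDerivAt v (cos (ω * s)) s := fun s _ => by
    have h := ((hasDerivAt_id s).const_mul ω).sin.div_const ω
    simp only [id, mul_one] at h
    exact h.congr_deriv (by field_simp)
  have hv_le : ∀ s, |v s| ≤ 1 / ω := fun s => by
    rw [abs_div, abs_of_pos hω]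
    exact div_le_div_of_nonneg_right (abs_sin_le_one _) hω.le
  have hM0 : 0 ≤ M := (abs_nonneg _).trans (hM a left_mem_uIcc)
  have hφv : ∀ s ∈ uIcc a b, |φ s * v s| ≤ M / ω := fun s hs => by
    rw [abs_mul, ← mul_one_div]
    exact mul_le_mul (hM s hs) (hv_le s) (abs_nonneg _) hM0
  have hφ'v : |∫ s in a..b, φ' s * v s| ≤ M' / ω * |b - a| := by
    refine intervalIntegral.norm_integral_le_of_norm_le_const (E := ℝ) fun s hs => ?_
    have hs := uIoc_subset_uIcc hs
    rw [Real.norm_eq_abs, abs_mul, ← mul_one_div]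
    exact mul_le_mul (hM' s hs) (hv_le s) (abs_nonneg _) ((abs_nonneg _).trans (hM' s hs))
  have hcos : Continuous fun s => cos (ω * s) := by fun_prop
  rw [intervalIntegral.integral_mul_deriv_eq_deriv_mul hφ hv hφ' (hcos.intervalIntegrable a b)]
  calc |φ b * v b - φ a * v a - ∫ s in a..b, φ' s * v s|
      ≤ |φ b * v b| + |φ a * v a| + |∫ s in a..b, φ' s * v s| :=
        (abs_sub _ _).trans (add_le_add_left (abs_sub _ _) _)
    _ ≤ M / ω + M / ω + M' / ω * |b - a| :=
      add_le_add_three (hφv b right_mem_uIcc) (hφv a left_mem_uIcc) hφ'v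
    _ = (2 * M + M' * |b - a|) / ω := by ring

lemma exists_abs_clausenC1_sub_clausenC1Partial_sub_le {A B : ℝ} (hA : 0 < A) (hB : B < 2 * π)
    (hπ : π ∈ Icc A B) :
    ∃ C, ∀ (n : ℕ), ∀ t ∈ Icc A B,
      |(clausenC1 t - clausenC1Partial n t) - (clausenC1 π - clausenC1Partial n π)| ≤
        C / (n + 1 / 2) := by
  set φ : ℝ → ℝ := fun s => (2 * sin (s / 2))⁻¹
  set φ' : ℝ → ℝ := fun s => -cos (s / 2) / (2 * sin (s / 2)) ^ 2
  have hsin : ∀ s ∈ Icc A B, 2 * sin (s / 2) ≠ 0 := fun s hs =>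
    (mul_pos two_pos (sin_half_pos (hA.trans_le hs.1) (hs.2.trans_lt hB))).ne'
  have hφ : ∀ s ∈ Icc A B, HasDerivAt φ (φ' s) s := fun s hs =>
    (hasDerivAt_two_mul_sin_half s).inv (hsin s hs)
  have hφ_cont : ContinuousOn φ (Icc A B) :=
    (Continuous.continuousOn (by fun_prop)).inv₀ hsin
  have hφ'_cont : ContinuousOn φ' (Icc A B) :=
    (Continuous.continuousOn (by fun_prop)).div (Continuous.continuousOn (by fun_prop))
      fun s hs => pow_ne_zero 2 (hsin s hs)
  obtain ⟨M, hM⟩ := isCompact_Icc.exists_bound_of_continuousOn hφ_cont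
  obtain ⟨M', hM'⟩ := isCompact_Icc.exists_bound_of_continuousOn hφ'_cont
  refine ⟨2 * M + M' * (B - A), fun n t ht => ?_⟩
  have hsub : uIcc π t ⊆ Icc A B := uIcc_subset_Icc hπ ht
  rw [← intervalIntegral.integral_eq_sub_of_hasDerivAt (fun s hs =>
      hasDerivAt_clausenC1_sub_clausenC1Partial n (hA.trans_le (hsub hs).1)
        ((hsub hs).2.trans_lt hB))
      ((((hφ_cont.mono hsub).mul (Continuous.continuousOn (by fun_prop))).neg).intervalIntegrable),
    intervalIntegral.integral_neg, abs_neg]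
  refine (abs_integral_mul_cos_le (by positivity) (fun s hs => hφ s (hsub hs))
    ((hφ'_cont.mono hsub).intervalIntegrable) (fun s hs => hM s (hsub hs))
    (fun s hs => hM' s (hsub hs))).trans ?_
  have hM'0 : 0 ≤ M' := (norm_nonneg _).trans (hM' π hπ)
  gcongr
  exact abs_sub_le_iff.2 ⟨by linarith [ht.2, hπ.1], by linarith [ht.1, hπ.2]⟩

lemma tendsto_sum_range_neg_one_pow_div_succ :
    Tendsto (fun n => ∑ k ∈ Finset.range n, (-1 : ℝ) ^ k / (k + 1)) atTop (𝓝 (log 2)) := by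
  obtain ⟨l, hl⟩ :
      ∃ l, Tendsto (fun n => ∑ k ∈ Finset.range n, (-1 : ℝ) ^ k / (k + 1)) atTop (𝓝 l) := by
    apply Antitone.tendsto_alternating_series_of_tendsto_zero
    · exact antitone_iff_forall_lt.mpr fun _ _ _ ↦ by gcongr
    · simpa using tendsto_one_div_add_atTop_nhds_zero_nat (𝕜 := ℝ)
  have hpow : ∀ x ∈ Ioo (0 : ℝ) 1,
      ∑' n : ℕ, (-1 : ℝ) ^ n / (n + 1) * x ^ n = log (1 + x) / x := fun x hx => by
    have h := ((hasSum_pow_div_log_of_abs_lt_one (x := -x)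
      (by rw [abs_neg, abs_of_pos hx.1]; exact hx.2)).neg).div_const x
    rw [sub_neg_eq_add, neg_neg] at h
    refine HasSum.tsum_eq (h.congr_fun fun n => ?_)
    have : x ≠ 0 := hx.1.ne'
    rw [neg_pow, pow_succ]
    field_simp
    ring
  have hcont : ContinuousAt (fun x => log (1 + x) / x) 1 :=
    ((continuousAt_log (by norm_num)).comp (by fun_prop)).div continuousAt_id one_ne_zero
  have habel : Tendsto (fun x => log (1 + x) / x) (𝓝[<] 1) (𝓝 l) :=
    (Real.tendsto_tsum_powerSeries_nhdsWithin_lt hl).congr' <| by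
      filter_upwards [Ioo_mem_nhdsLT (show (0 : ℝ) < 1 by norm_num)] with x hx using hpow x hx
  have hl2 : l = log 2 := by
    refine tendsto_nhds_unique habel ?_
    simpa [one_add_one_eq_two] using hcont.tendsto.mono_left nhdsWithin_le_nhds
  rwa [hl2] at hl

lemma tendsto_clausenC1Partial_pi :
    Tendsto (clausenC1Partial · π) atTop (𝓝 (clausenC1 π)) := by
  have hC1 : clausenC1 π = -log 2 := by simp [clausenC1]
  have hpartial (n : ℕ) :
      clausenC1Partial n π = -∑ k ∈ Finset.range n, (-1 : ℝ) ^ k / (k + 1) := by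
    rw [clausenC1Partial, ← Finset.sum_neg_distrib]
    refine Finset.sum_congr rfl fun k _ => ?_
    rw [show ((k : ℝ) + 1) * π = ((k + 1 : ℕ) : ℝ) * π by push_cast; ring, cos_nat_mul_pi,
      pow_succ]
    ring
  simpa only [hC1, hpartial] using tendsto_sum_range_neg_one_pow_div_succ.neg

lemma tendstoUniformlyOn_clausenC1Partial {A B : ℝ} (hA : 0 < A) (hB : B < 2 * π) :
    TendstoUniformlyOn clausenC1Partial clausenC1 atTop (Icc A B) := by
  wlog hπ : π ∈ Icc A B generalizing A B
  · exact (this (lt_min hA pi_pos) (max_lt hB (by linarith [pi_pos]))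
      ⟨min_le_right _ _, le_max_right _ _⟩).mono
      (Icc_subset_Icc (min_le_left _ _) (le_max_left _ _))
  obtain ⟨C, hC⟩ := exists_abs_clausenC1_sub_clausenC1Partial_sub_le hA hB hπ
  have hdecay : Tendsto (fun n : ℕ => C / (n + 1 / 2)) atTop (𝓝 0) :=
    tendsto_const_nhds.div_atTop (tendsto_atTop_add_const_right _ _ tendsto_natCast_atTop_atTop)
  have hπlim : Tendsto (fun n => clausenC1 π - clausenC1Partial n π) atTop (𝓝 0) := by
    simpa using tendsto_clausenC1Partial_pi.const_sub (clausenC1 π)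
  rw [Metric.tendstoUniformlyOn_iff]
  intro ε hε
  filter_upwards [(hdecay.add hπlim.abs).eventually (gt_mem_nhds (by simpa using hε))]
    with n hn t ht
  have htri := abs_sub_le (clausenC1 t - clausenC1Partial n t)
    (clausenC1 π - clausenC1Partial n π) 0
  rw [sub_zero, sub_zero] at htri
  rw [Real.dist_eq]
  linarith [hC n t ht]

lemma hasDerivAt_clausenS2 {t : ℝ} (h0 : 0 < t) (h2π : t < 2 * π) :
    HasDerivAt clausenS2 (clausenC1 t) t := by
  refine hasDerivAt_of_tendstoLocallyUniformlyOn isOpen_Ioo ?_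
    (Eventually.of_forall fun n s _ => hasDerivAt_clausenS2Partial n s)
    (fun s _ => tendsto_clausenS2Partial s) (mem_Ioo.2 ⟨h0, h2π⟩)
  refine tendstoLocallyUniformlyOn_of_forall_exists_nhds fun s hs => ⟨Icc (s / 2) (s / 2 + π),
    nhdsWithin_le_nhds (Icc_mem_nhds (by linarith [hs.1]) (by linarith [hs.2])),
    tendstoUniformlyOn_clausenC1Partial (by linarith [hs.1]) (by linarith [hs.2])⟩

lemma integral_clausenC1 {a b : ℝ} (ha : 0 ≤ a) (hab : a ≤ b) (hb : b ≤ 2 * π) :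
    ∫ t in a..b, clausenC1 t = clausenS2 b - clausenS2 a :=
  intervalIntegral.integral_eq_sub_of_hasDerivAt_of_le hab continuous_clausenS2.continuousOn
    (fun _ ht => hasDerivAt_clausenS2 (ha.trans_lt ht.1) (ht.2.trans_le hb))
    (intervalIntegrable_clausenC1 a b)

lemma Iker_eq_clausenC1 {x y : ℝ} (h₁ : sin ((y - x) / 2) ≠ 0) (h₂ : sin ((x + y) / 2) ≠ 0)
    (h₃ : sin (y / 2) ≠ 0) :
    Iker x y = 2 * clausenC1 y - clausenC1 (y - x) - clausenC1 (x + y) := by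
  simp only [Iker, clausenC1]
  rw [log_div (mul_ne_zero h₁ h₂) (pow_ne_zero 2 h₃), log_mul h₁ h₂, log_pow,
    log_mul two_ne_zero h₁, log_mul two_ne_zero h₂, log_mul two_ne_zero h₃]
  push_cast
  ring

lemma Iker_neg {x y : ℝ} (hx : 0 < x) (hxy : x < y) (hxy' : x + y < 2 * π) : Iker x y < 0 := by
  have h₁ := sin_half_pos (sub_pos.2 hxy) (by linarith)
  have h₂ := sin_half_pos (by linarith) hxy'
  have h₃ := sin_half_pos (by linarith) (by linarith : y < 2 * π)
  have h₄ := sin_half_pos hx (by linarith : x < 2 * π)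
  refine log_neg (by positivity) ((div_lt_one (by positivity)).2 ?_)
  have hprod : 2 * sin ((y - x) / 2) * sin ((x + y) / 2) = cos x - cos y := by
    rw [two_mul_sin_mul_sin, show (y - x) / 2 - (x + y) / 2 = -x by ring,
      show (y - x) / 2 + (x + y) / 2 = y by ring, cos_neg]
  have hsq (t : ℝ) : 2 * sin (t / 2) * sin (t / 2) = 1 - cos t := by
    rw [two_mul_sin_mul_sin, sub_self, cos_zero, add_halves]
  nlinarith [hsq x, hsq y]

lemma neg_Iker_eqOn {x δ : ℝ} (hx : 0 < x) (hδ : 0 ≤ δ) (hxδ : 2 * x + δ < 2 * π) :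
    EqOn (fun y => -Iker x y)
      (fun y => clausenC1 (y - x) + clausenC1 (x + y) - 2 * clausenC1 y) (uIoc x (x + δ)) := by
  rw [uIoc_of_le (by linarith)]
  intro y hy
  dsimp only
  rw [Iker_eq_clausenC1 (sin_half_pos (sub_pos.2 hy.1) (by linarith [hy.2])).ne'
    (sin_half_pos (by linarith [hy.1]) (by linarith [hy.2])).ne'
    (sin_half_pos (by linarith [hy.1]) (by linarith [hy.2])).ne']
  ring

lemma intervalIntegrable_neg_Iker {x δ : ℝ} (hx : 0 < x) (hδ : 0 ≤ δ)
    (hxδ : 2 * x + δ < 2 * π) :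
    IntervalIntegrable (fun y => -Iker x y) volume x (x + δ) :=
  (intervalIntegrable_congr (neg_Iker_eqOn hx hδ hxδ)).2 <|
    ((intervalIntegrable_clausenC1_comp_sub_right _ _ _).add
      (intervalIntegrable_clausenC1_comp_add_left _ _ _)).sub
      ((intervalIntegrable_clausenC1 _ _).const_mul 2)

lemma integral_neg_Iker {x δ : ℝ} (hx : 0 < x) (hδ : 0 ≤ δ) (hxδ : 2 * x + δ < 2 * π) :
    ∫ y in x..x + δ, -Iker x y =
      (clausenS2 δ + clausenS2 (2 * x + δ) - 2 * clausenS2 (x + δ)) -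
        (clausenS2 0 + clausenS2 (2 * x) - 2 * clausenS2 x) := by
  have h₁ := intervalIntegrable_clausenC1_comp_sub_right x x (x + δ)
  have h₂ := intervalIntegrable_clausenC1_comp_add_left x x (x + δ)
  have h₃ := (intervalIntegrable_clausenC1 x (x + δ)).const_mul 2
  have e₁ : ∫ y in x..x + δ, clausenC1 (y - x) = clausenS2 δ - clausenS2 0 := by
    rw [intervalIntegral.integral_comp_sub_right, sub_self, add_sub_cancel_left]
    exact integral_clausenC1 le_rfl hδ (by linarith)
  have e₂ : ∫ y in x..x + δ, clausenC1 (x + y) = clausenS2 (2 * x + δ) - clausenS2 (2 * x) := by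
    rw [intervalIntegral.integral_comp_add_left, ← add_assoc, ← two_mul]
    exact integral_clausenC1 (by linarith) (by linarith) hxδ.le
  have e₃ : ∫ y in x..x + δ, clausenC1 y = clausenS2 (x + δ) - clausenS2 x :=
    integral_clausenC1 hx.le (by linarith) (by linarith)
  rw [intervalIntegral.integral_congr_ae (Eventually.of_forall fun y hy =>
      neg_Iker_eqOn hx hδ hxδ hy),
    intervalIntegral.integral_sub (h₁.add h₂) h₃, intervalIntegral.integral_add h₁ h₂,
    intervalIntegral.integral_const_mul, e₁, e₂, e₃]
  ring

lemma continuousOn_mul_sqrt_log_one_add_one_div :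
    ContinuousOn (fun y : ℝ => y * √(log (1 + 1 / y))) (Ioi 0) :=
  continuousOn_id.mul ((continuousOn_const.add (continuousOn_const.div continuousOn_id
    fun _ hy => (mem_Ioi.1 hy).ne')).log fun _ hy =>
      (add_pos one_pos (one_div_pos.2 (mem_Ioi.1 hy))).ne').sqrt

/-- Mean value representation of the singular part of `U₂`: for `0 < x < π` and
`0 < δ ≤ π − x` there is `ξ` in the image of `y ↦ y·√(log(1+1/y))` on `[x, x+δ]` with
`−∫ₓ^{x+δ} I(x,y)·y·√(log(1+1/y)) dy` equal to the stated combination of values of `S₂`. -/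
theorem stmt_15 (x δ : ℝ) (hx : x ∈ Ioo 0 Real.pi) (hδ : 0 < δ) (hδ' : δ ≤ Real.pi - x) :
    ∃ ξ ∈ (fun y : ℝ => y * Real.sqrt (Real.log (1 + 1 / y))) '' Icc x (x + δ),
      -(∫ y in x..(x + δ), Iker x y * (y * Real.sqrt (Real.log (1 + 1 / y)))) =
        ξ * ((clausenS2 δ + clausenS2 (2 * x + δ) - 2 * clausenS2 (x + δ)) -
          (clausenS2 0 + clausenS2 (2 * x) - 2 * clausenS2 x)) := by
  obtain ⟨hx0, hxπ⟩ := hx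
  have hxδ : x ≤ x + δ := by linarith
  have h2π : 2 * x + δ < 2 * π := by linarith
  obtain ⟨c, hc, hmean⟩ := exists_eq_const_mul_intervalIntegral_of_nonneg
    (continuousOn_mul_sqrt_log_one_add_one_div.mono fun y hy =>
      hx0.trans_le (uIcc_of_le hxδ ▸ hy).1)
    (intervalIntegrable_neg_Iker hx0 hδ.le h2π)
    fun y hy => neg_nonneg.2 (Iker_neg hx0 (uIoc_of_le hxδ ▸ hy).1
      (by linarith [(uIoc_of_le hxδ ▸ hy).2])).le
  refine ⟨_, ⟨c, uIcc_of_le hxδ ▸ hc, rfl⟩, ?_⟩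
  rw [← integral_neg_Iker hx0 hδ.le h2π, ← hmean, ← intervalIntegral.integral_neg]
  exact intervalIntegral.integral_congr fun y _ => by ring
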